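/- There is no 4-way latin square of order 6 with exactly 9 fixed cells, i.e., 9 ∉ I⁴[6]. -/

import Mathlib

/-- A μ-way latin square of order n: μ latin squares on symbols `Fin n` such that
in every cell the μ entries are all equal or pairwise distinct. -/
def IsMuWayLatinSquare {μ n : ℕ} (L : Fin μ → Fin n → Fin n → Fin n) : Prop :=
  (∀ m i, Function.Injective (L m i)) ∧
  (∀ m j, Function.Injective (fun i => L m i j)) ∧
  (∀ i j, (∀ a b, L a i j = L b i j) ∨ Function.Injective (fun a => L a i j))

/-- A cell is fixed when the μ entries there coincide. -/
def IsFixedCell {μ n : ℕ} (L : Fin μ → Fin n → Fin n → Fin n) (i j : Fin n) : Prop :=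
  ∀ a b, L a i j = L b i j

instance {μ n : ℕ} (L : Fin μ → Fin n → Fin n → Fin n) (i j : Fin n) :
    Decidable (IsFixedCell L i j) :=
  inferInstanceAs (Decidable (∀ a b, L a i j = L b i j))

/-- The number of fixed cells. -/
def numFixed {μ n : ℕ} (L : Fin μ → Fin n → Fin n → Fin n) : ℕ :=
  (Finset.univ.filter fun p : Fin n × Fin n => IsFixedCell L p.1 p.2).card

/-- The number of fixed cells in row `i`. -/
def rowFixed {μ n : ℕ} (L : Fin μ → Fin n → Fin n → Fin n) (i : Fin n) : ℕ :=
  (Finset.univ.filter fun j : Fin n => IsFixedCell L i j).card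

/-- The intersection spectrum `I^μ[n]`. -/
def Spectrum (μ n : ℕ) : Set ℕ :=
  {k | ∃ L : Fin μ → Fin n → Fin n → Fin n, IsMuWayLatinSquare L ∧ numFixed L = k}

/-! At a non-fixed cell the four entries are pairwise distinct, so the fixed cells in its row and
column exclude at most two symbols there. Hence a row with three fixed cells is entirely fixed,
and, passing to the conjugates that exchange rows, columns and symbols, so is a column or a symbol
with three fixed cells. With nine fixed cells no row is entirely fixed, so every row, column and
symbol carries at most two fixed cells. But a row with two fixed cells, in columns `x`, `y` with
symbols `s`, `t`, forces every fixed cell into column `x` or `y` or to carry the symbol `s` or `t`,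
which accounts for at most eight fixed cells. -/

open Finset Function

section General

variable {μ n : ℕ} {L : Fin μ → Fin n → Fin n → Fin n}

theorem numFixed_eq_sum_rowFixed (L : Fin μ → Fin n → Fin n → Fin n) :
    numFixed L = ∑ i, rowFixed L i := by
  rw [numFixed, card_filter, Fintype.sum_prod_type]
  exact sum_congr rfl fun i _ => (card_filter _ _).symm

theorem rowFixed_eq_of_forall {i : Fin n} (h : ∀ j, IsFixedCell L i j) : rowFixed L i = n := by
  rw [rowFixed, filter_true_of_mem fun j _ => h j, card_univ, Fintype.card_fin]

theorem rowFixed_pos {i j : Fin n} (h : IsFixedCell L i j) : 0 < rowFixed L i :=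
  card_pos.2 ⟨j, mem_filter.2 ⟨mem_univ j, h⟩⟩

theorem exists_isFixedCell_iff_of_rowFixed_eq_two {i : Fin n} (h : rowFixed L i = 2) :
    ∃ x y, x ≠ y ∧ ∀ c, IsFixedCell L i c ↔ c = x ∨ c = y := by
  obtain ⟨x, y, hxy, hrow⟩ := card_eq_two.1 h
  exact ⟨x, y, hxy, fun c => by simpa using Finset.ext_iff.1 hrow c⟩

namespace IsMuWayLatinSquare

theorem injective_of_not_isFixedCell (hL : IsMuWayLatinSquare L) {i j : Fin n}
    (h : ¬ IsFixedCell L i j) : Injective fun a => L a i j :=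
  (hL.2.2 i j).resolve_left h

theorem apply_ne_of_isFixedCell_row (hL : IsMuWayLatinSquare L) {i b j : Fin n}
    (hb : IsFixedCell L i b) (hbj : b ≠ j) (a a' : Fin μ) : L a i j ≠ L a' i b :=
  fun h => hbj (hL.1 a i (h.trans (hb a' a))).symm

theorem apply_ne_of_isFixedCell_col (hL : IsMuWayLatinSquare L) {r i j : Fin n}
    (hr : IsFixedCell L r j) (hri : r ≠ i) (a a' : Fin μ) : L a i j ≠ L a' r j :=
  fun h => hri (hL.2.1 a j (h.trans (hr a' a))).symm

theorem card_add_le_of_not_isFixedCell (hL : IsMuWayLatinSquare L) {i j : Fin n}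
    (h : ¬ IsFixedCell L i j) {S : Finset (Fin n)} (hS : ∀ a, L a i j ∉ S) : #S + μ ≤ n := by
  have hμ := card_le_card_of_injOn (s := univ) (t := Sᶜ) (fun a => L a i j)
    (fun a _ => by simpa using hS a) (hL.injective_of_not_isFixedCell h).injOn
  rw [card_univ, Fintype.card_fin, card_compl, Fintype.card_fin] at hμ
  have hS := S.card_le_univ
  rw [Fintype.card_fin] at hS
  omega

theorem isFixedCell_of_sub_lt_rowFixed (hL : IsMuWayLatinSquare L) {i : Fin n}
    (h : n - μ < rowFixed L i) (j : Fin n) : IsFixedCell L i j := by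
  by_contra hj
  obtain ⟨a, -⟩ : ∃ a b, L a i j ≠ L b i j := by simpa [IsFixedCell] using hj
  have hcard := hL.card_add_le_of_not_isFixedCell hj
    (S := (univ.filter (IsFixedCell L i ·)).image (L a i)) fun c hc => by
      obtain ⟨b, hb, hbc⟩ := mem_image.1 hc
      have hb := (mem_filter.1 hb).2
      exact hL.apply_ne_of_isFixedCell_row hb (by rintro rfl; exact hj hb) c a hbc.symm
  rw [card_image_of_injective _ (hL.1 a i)] at hcard
  rw [rowFixed] at h
  omega

end IsMuWayLatinSquare

def swapRowCol (L : Fin μ → Fin n → Fin n → Fin n) : Fin μ → Fin n → Fin n → Fin n :=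
  fun m i j => L m j i

theorem isMuWayLatinSquare_swapRowCol (hL : IsMuWayLatinSquare L) :
    IsMuWayLatinSquare (swapRowCol L) :=
  ⟨hL.2.1, hL.1, fun i j => hL.2.2 j i⟩

theorem numFixed_swapRowCol : numFixed (swapRowCol L) = numFixed L :=
  card_equiv (Equiv.prodComm _ _) fun p => by simp only [mem_filter, mem_univ, true_and]; rfl

/-- `swapColSymbol L m i s` is the column in which `L m i` has the symbol `s`. In
`swapRowCol (swapColSymbol L)` the rows are indexed by symbols: its fixed cell `(t, r)` records a
fixed cell of `L` in row `r` carrying the symbol `t`. -/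
noncomputable def swapColSymbol [NeZero n] (L : Fin μ → Fin n → Fin n → Fin n) :
    Fin μ → Fin n → Fin n → Fin n :=
  fun m i => invFun (L m i)

theorem swapColSymbol_eq_iff [NeZero n] (hL : IsMuWayLatinSquare L) {m : Fin μ} {i s j : Fin n} :
    swapColSymbol L m i s = j ↔ L m i j = s := by
  constructor
  · rintro rfl
    exact invFun_eq (Finite.injective_iff_surjective.1 (hL.1 m i) s)
  · rintro rfl
    exact leftInverse_invFun (hL.1 m i) j

theorem apply_swapColSymbol [NeZero n] (hL : IsMuWayLatinSquare L) {m : Fin μ} {i s : Fin n} :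
    L m i (swapColSymbol L m i s) = s :=
  (swapColSymbol_eq_iff hL).1 rfl

theorem isMuWayLatinSquare_swapColSymbol [NeZero n] (hL : IsMuWayLatinSquare L) :
    IsMuWayLatinSquare (swapColSymbol L) := by
  refine ⟨fun m i s s' h => ?_, fun m s i i' h => ?_, fun i s => or_iff_not_imp_right.2 ?_⟩
  · rw [← apply_swapColSymbol hL (s := s), h, apply_swapColSymbol hL]
  · have hi' := apply_swapColSymbol hL (m := m) (i := i') (s := s)
    beta_reduce at h
    rw [← h] at hi'
    exact hL.2.1 m _ ((apply_swapColSymbol hL).trans hi'.symm)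
  simp only [Injective, not_forall]
  rintro ⟨a, b, he, hab⟩
  have hb := apply_swapColSymbol hL (m := b) (i := i) (s := s)
  rw [← he] at hb
  have hfix := (hL.2.2 i _).resolve_right fun hi =>
    hab (hi ((apply_swapColSymbol hL).trans hb.symm))
  intro c d
  rw [(swapColSymbol_eq_iff hL).2 ((hfix c a).trans (apply_swapColSymbol hL)),
    (swapColSymbol_eq_iff hL).2 ((hfix d a).trans (apply_swapColSymbol hL))]

theorem isFixedCell_swapColSymbol_iff [NeZero μ] [NeZero n] (hL : IsMuWayLatinSquare L)
    {i s : Fin n} : IsFixedCell (swapColSymbol L) i s ↔ ∃ j, IsFixedCell L i j ∧ L 0 i j = s := by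
  constructor
  · intro h
    have hj : ∀ a, L a i (swapColSymbol L 0 i s) = s := fun a =>
      (swapColSymbol_eq_iff hL).1 (h a 0)
    exact ⟨_, fun a b => (hj a).trans (hj b).symm, hj 0⟩
  · rintro ⟨j, hj, rfl⟩ a b
    rw [(swapColSymbol_eq_iff hL).2 (hj a 0), (swapColSymbol_eq_iff hL).2 (hj b 0)]

theorem numFixed_swapColSymbol [NeZero μ] [NeZero n] (hL : IsMuWayLatinSquare L) :
    numFixed (swapColSymbol L) = numFixed L := by
  refine card_nbij' (fun p => (p.1, swapColSymbol L 0 p.1 p.2)) (fun p => (p.1, L 0 p.1 p.2))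
    (fun p hp => ?_) (fun p hp => ?_) (fun p _ => ?_) (fun p _ => ?_)
  · obtain ⟨j, hj, hjs⟩ := (isFixedCell_swapColSymbol_iff hL).1 (mem_filter.1 hp).2
    simpa [(swapColSymbol_eq_iff hL).2 hjs] using hj
  · simpa using (isFixedCell_swapColSymbol_iff hL).2 ⟨_, (mem_filter.1 hp).2, rfl⟩
  · simp [apply_swapColSymbol hL]
  · simp [(swapColSymbol_eq_iff hL).2 rfl]

end General

namespace IsMuWayLatinSquare

variable {L : Fin 4 → Fin 6 → Fin 6 → Fin 6}

theorem eq_or_eq_of_forall_apply_ne (hL : IsMuWayLatinSquare L) {i j : Fin 6}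
    (h : ¬ IsFixedCell L i j) {s₁ s₂ s₃ : Fin 6} (h₁₂ : s₁ ≠ s₂) (h₁ : ∀ a, L a i j ≠ s₁)
    (h₂ : ∀ a, L a i j ≠ s₂) (h₃ : ∀ a, L a i j ≠ s₃) : s₃ = s₁ ∨ s₃ = s₂ := by
  by_contra! hne
  have hcard := hL.card_add_le_of_not_isFixedCell h (S := {s₁, s₂, s₃}) fun a => by
    simp [h₁ a, h₂ a, h₃ a]
  rw [card_eq_three.2 ⟨s₁, s₂, s₃, h₁₂, hne.1.symm, hne.2.symm, rfl⟩] at hcard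
  omega

theorem exists_isFixedCell_symbol_eq_of_three (hL : IsMuWayLatinSquare L)
    {r₁ r₂ r₃ c₁ c₂ c₃ t : Fin 6} (hr₁₂ : r₁ ≠ r₂) (hr₁₃ : r₁ ≠ r₃) (hr₂₃ : r₂ ≠ r₃)
    (h₁ : IsFixedCell L r₁ c₁) (h₂ : IsFixedCell L r₂ c₂) (h₃ : IsFixedCell L r₃ c₃)
    (ht₁ : L 0 r₁ c₁ = t) (ht₂ : L 0 r₂ c₂ = t) (ht₃ : L 0 r₃ c₃ = t) (i : Fin 6) :
    ∃ j, IsFixedCell L i j ∧ L 0 i j = t := by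
  have hmem : ∀ {r c}, IsFixedCell L r c → L 0 r c = t →
      r ∈ univ.filter (IsFixedCell (swapRowCol (swapColSymbol L)) t ·) := fun hf ht =>
    mem_filter.2 ⟨mem_univ _, (isFixedCell_swapColSymbol_iff hL).2 ⟨_, hf, ht⟩⟩
  have hS := isMuWayLatinSquare_swapRowCol (isMuWayLatinSquare_swapColSymbol hL)
  exact (isFixedCell_swapColSymbol_iff hL).1 (hS.isFixedCell_of_sub_lt_rowFixed
    (two_lt_card.2 ⟨r₁, hmem h₁ ht₁, r₂, hmem h₂ ht₂, r₃, hmem h₃ ht₃, hr₁₂, hr₁₃, hr₂₃⟩) i)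

theorem col_eq_or_symbol_eq_of_two_fixed (hL : IsMuWayLatinSquare L) {i x y : Fin 6}
    (hxy : x ≠ y) (hrow : ∀ c, IsFixedCell L i c ↔ c = x ∨ c = y) {r c : Fin 6}
    (hrc : IsFixedCell L r c) :
    c = x ∨ c = y ∨ L 0 r c = L 0 i x ∨ L 0 r c = L 0 i y := by
  by_cases hc : c = x ∨ c = y
  · exact hc.elim .inl (.inr ∘ .inl)
  have hic : ¬ IsFixedCell L i c := fun h => hc ((hrow c).1 h)
  have hri : r ≠ i := by rintro rfl; exact hic hrc
  rw [not_or] at hc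
  exact .inr <| .inr <| hL.eq_or_eq_of_forall_apply_ne hic (fun h => hxy (hL.1 0 i h))
    (fun a => hL.apply_ne_of_isFixedCell_row ((hrow x).2 (.inl rfl)) (Ne.symm hc.1) a 0)
    (fun a => hL.apply_ne_of_isFixedCell_row ((hrow y).2 (.inr rfl)) (Ne.symm hc.2) a 0)
    (fun a => hL.apply_ne_of_isFixedCell_col hrc hri a 0)

theorem numFixed_le_of_two_fixed (hL : IsMuWayLatinSquare L) {i x y : Fin 6} (hxy : x ≠ y)
    (hrow : ∀ c, IsFixedCell L i c ↔ c = x ∨ c = y) :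
    numFixed L ≤ rowFixed (swapRowCol L) x + rowFixed (swapRowCol L) y +
      rowFixed (swapRowCol (swapColSymbol L)) (L 0 i x) +
      rowFixed (swapRowCol (swapColSymbol L)) (L 0 i y) := by
  let colCells (c : Fin 6) := (univ.filter (IsFixedCell (swapRowCol L) c ·)).image (·, c)
  let symbolCells (t : Fin 6) :=
    (univ.filter (IsFixedCell (swapRowCol (swapColSymbol L)) t ·)).image
      fun r => (r, swapColSymbol L 0 r t)
  have hcover : univ.filter (fun p : Fin 6 × Fin 6 => IsFixedCell L p.1 p.2) ⊆
      colCells x ∪ colCells y ∪ symbolCells (L 0 i x) ∪ symbolCells (L 0 i y) := by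
    rintro ⟨r, c⟩ hrc
    have hrc : IsFixedCell L r c := (mem_filter.1 hrc).2
    have hcol : (r, c) ∈ colCells c := mem_image.2 ⟨r, mem_filter.2 ⟨mem_univ _, hrc⟩, rfl⟩
    have hsym : (r, c) ∈ symbolCells (L 0 r c) := mem_image.2 ⟨r, mem_filter.2 ⟨mem_univ _,
      (isFixedCell_swapColSymbol_iff hL).2 ⟨c, hrc, rfl⟩⟩, by rw [(swapColSymbol_eq_iff hL).2 rfl]⟩
    simp only [mem_union]
    rcases hL.col_eq_or_symbol_eq_of_two_fixed hxy hrow hrc with rfl | rfl | h | h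
    · exact .inl (.inl (.inl hcol))
    · exact .inl (.inl (.inr hcol))
    · exact .inl (.inr (h ▸ hsym))
    · exact .inr (h ▸ hsym)
  calc numFixed L
      ≤ #(colCells x ∪ colCells y ∪ symbolCells (L 0 i x) ∪ symbolCells (L 0 i y)) :=
        card_le_card hcover
    _ ≤ #(colCells x) + #(colCells y) + #(symbolCells (L 0 i x)) + #(symbolCells (L 0 i y)) := by
        grw [card_union_le, card_union_le, card_union_le]
    _ ≤ _ := by grw [card_image_le, card_image_le, card_image_le, card_image_le]; rfl

theorem rowFixed_le_one_of_forall_isFixedCell (hL : IsMuWayLatinSquare L) {R i : Fin 6}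
    (hR : ∀ j, IsFixedCell L R j) (hi : ¬ ∀ j, IsFixedCell L i j) : rowFixed L i ≤ 1 := by
  by_contra! h1
  obtain ⟨x, y, hxy, hrow⟩ := exists_isFixedCell_iff_of_rowFixed_eq_two <|
    le_antisymm (not_lt.1 fun h => hi (hL.isFixedCell_of_sub_lt_rowFixed h)) h1
  have hsurj := Finite.injective_iff_surjective.1 (hL.1 0 R)
  obtain ⟨cx, hcx⟩ := hsurj (L 0 i x)
  obtain ⟨cy, hcy⟩ := hsurj (L 0 i y)
  have hcover : (univ : Finset (Fin 6)) ⊆ {x, y, cx, cy} := fun c _ => by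
    rcases hL.col_eq_or_symbol_eq_of_two_fixed hxy hrow (hR c) with h | h | h | h
    · simp [h]
    · simp [h]
    · simp [hL.1 0 R (h.trans hcx.symm)]
    · simp [hL.1 0 R (h.trans hcy.symm)]
  simpa using (card_le_card hcover).trans card_le_four

theorem not_forall_isFixedCell (hL : IsMuWayLatinSquare L) (h9 : numFixed L = 9) (R : Fin 6) :
    ¬ ∀ j, IsFixedCell L R j := by
  /- The other rows carry three fixed cells, at most one each, so some row `i₀` has none and some
  row `r` has exactly one, at `(r, c₁)`. A column `c` other than `c₁` and the column `c'` of the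
  symbol `L 0 r c₁` in row `R` has no fixed cell outside row `R`: the cell `(r, c)` would exclude
  three symbols, unless that fixed cell carries `L 0 r c₁`, and then this symbol is fixed in three
  rows, hence in row `i₀` as well. So the column counts add up to at most eight. -/
  intro hR
  have hrest : ∑ i ∈ univ.erase R, rowFixed L i = 3 := by
    have := numFixed_eq_sum_rowFixed L
    rw [← add_sum_erase _ _ (mem_univ R), rowFixed_eq_of_forall hR] at this
    omega
  have hle : ∀ i ∈ univ.erase R, rowFixed L i ≤ 1 := fun i hi =>
    hL.rowFixed_le_one_of_forall_isFixedCell hR fun hfull => by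
      have := single_le_sum (f := rowFixed L) (fun _ _ => Nat.zero_le _) hi
      rw [rowFixed_eq_of_forall hfull, hrest] at this
      omega
  obtain ⟨i₀, -, hi₀⟩ : ∃ i ∈ univ.erase R, rowFixed L i < 1 :=
    exists_lt_of_sum_lt (by simp [hrest])
  have hi₀ : ∀ j, ¬ IsFixedCell L i₀ j := fun j h => by have := rowFixed_pos h; omega
  obtain ⟨r, hr, hr0⟩ :=
    exists_ne_zero_of_sum_ne_zero (by omega : ∑ i ∈ univ.erase R, rowFixed L i ≠ 0)
  obtain ⟨c₁, hc₁⟩ := card_eq_one.1 (le_antisymm (hle r hr) (Nat.pos_of_ne_zero hr0))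
  have hrow : ∀ c, IsFixedCell L r c ↔ c = c₁ := fun c => by simpa using Finset.ext_iff.1 hc₁ c
  have hrR : r ≠ R := (mem_erase.1 hr).1
  obtain ⟨c', hc'⟩ := Finite.injective_iff_surjective.1 (hL.1 0 R) (L 0 r c₁)
  have hcol : ∀ c, rowFixed (swapRowCol L) c ≤ 2 := fun c => not_lt.1 fun h =>
    hi₀ c ((isMuWayLatinSquare_swapRowCol hL).isFixedCell_of_sub_lt_rowFixed h i₀)
  have hcol' : ∀ c, c ≠ c₁ → c ≠ c' → rowFixed (swapRowCol L) c ≤ 1 := by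
    intro c hcc₁ hcc'
    suffices h : ∀ p, IsFixedCell L p c → p = R from card_le_one.2 fun p hp q hq => by
      rw [h p (mem_filter.1 hp).2, h q (mem_filter.1 hq).2]
    intro p hp
    by_contra hpR
    have hrc : ¬ IsFixedCell L r c := fun h => hcc₁ ((hrow c).1 h)
    have hpr : p ≠ r := by rintro rfl; exact hrc hp
    have ht : L 0 p c = L 0 r c₁ := (hL.eq_or_eq_of_forall_apply_ne hrc
      (fun h => hcc' (hL.1 0 R (h.trans hc'.symm)))
      (fun a => hL.apply_ne_of_isFixedCell_col (hR c) hrR.symm a 0)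
      (fun a => hL.apply_ne_of_isFixedCell_row ((hrow c₁).2 rfl) (Ne.symm hcc₁) a 0)
      (fun a => hL.apply_ne_of_isFixedCell_col hp hpr a 0)).resolve_left
        fun h => hpR (hL.2.1 0 c h)
    obtain ⟨j, hj, -⟩ := hL.exists_isFixedCell_symbol_eq_of_three hrR.symm (Ne.symm hpR) hpr.symm
      (hR c') ((hrow c₁).2 rfl) hp hc' rfl ht i₀
    exact hi₀ j hj
  have hsum : ∑ c, rowFixed (swapRowCol L) c = 9 := by
    rw [← numFixed_eq_sum_rowFixed, numFixed_swapRowCol, h9]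
  have hbound : ∑ c, rowFixed (swapRowCol L) c ≤
      ∑ c : Fin 6, (1 + (if c = c₁ then 1 else 0) + (if c = c' then 1 else 0)) := by
    refine sum_le_sum fun c _ => ?_
    have := hcol c
    have := hcol' c
    split_ifs <;> omega
  simp [sum_add_distrib] at hbound
  omega

theorem rowFixed_le_two (hL : IsMuWayLatinSquare L) (h9 : numFixed L = 9) (i : Fin 6) :
    rowFixed L i ≤ 2 :=
  not_lt.1 fun h => hL.not_forall_isFixedCell h9 i (hL.isFixedCell_of_sub_lt_rowFixed h)

end IsMuWayLatinSquare

theorem stmt_14 : (9 : ℕ) ∉ Spectrum 4 6 := by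
  rintro ⟨L, hL, h9⟩
  have hT := isMuWayLatinSquare_swapRowCol hL
  have hS := isMuWayLatinSquare_swapRowCol (isMuWayLatinSquare_swapColSymbol hL)
  have hT9 : numFixed (swapRowCol L) = 9 := by rw [numFixed_swapRowCol, h9]
  have hS9 : numFixed (swapRowCol (swapColSymbol L)) = 9 := by
    rw [numFixed_swapRowCol, numFixed_swapColSymbol hL, h9]
  obtain ⟨i, -, hi⟩ : ∃ i ∈ univ, 1 < rowFixed L i :=
    exists_lt_of_sum_lt (by simp [← numFixed_eq_sum_rowFixed, h9])
  obtain ⟨x, y, hxy, hrow⟩ :=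
    exists_isFixedCell_iff_of_rowFixed_eq_two (le_antisymm (hL.rowFixed_le_two h9 i) hi)
  have := hL.numFixed_le_of_two_fixed hxy hrow
  have := hT.rowFixed_le_two hT9 x
  have := hT.rowFixed_le_two hT9 y
  have := hS.rowFixed_le_two hS9 (L 0 i x)
  have := hS.rowFixed_le_two hS9 (L 0 i y)
  omega
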